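/- Let ε ∈ (0,1/4), q₀ := 3/(2ε) (so q₀ > 6), assume D := ‖ξ‖_{W^{3,2}(0,𝒯)} < ε₀, and let w ∈ X_{q₀}. Then there is a constant C > 0 such that ∫_0^t ‖T(t,s)P div(w⊗w)(s)‖_∞ ds ≤ C [w]_{q₀}² t^{−1/2} for all t > 0. -/

import Mathlib

/- Common setting: exterior domain in ℝ³, Lorentz norms, the non-autonomous Oseen
evolution operator, Helmholtz projection, the time-periodic Navier–Stokes solution,
and the various norms/spaces used in Galdi–Hishida,
"Attainability of Time-Periodic flow of a Viscous Liquid Past an Oscillating Body". -/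

open MeasureTheory Set Filter
open scoped ENNReal NNReal RealInnerProductSpace Topology

noncomputable section

abbrev Vec : Type := EuclideanSpace ℝ (Fin 3)
abbrev VF : Type := Vec → Vec
abbrev Mat3 : Type := EuclideanSpace ℝ (Fin 3 × Fin 3)
abbrev MF : Type := Vec → Mat3

def mk3 (f : Fin 3 → ℝ) : Vec := (WithLp.equiv 2 (Fin 3 → ℝ)).symm f
def mk9 (f : Fin 3 × Fin 3 → ℝ) : Mat3 := (WithLp.equiv 2 (Fin 3 × Fin 3 → ℝ)).symm f

/-- standard basis of ℝ³ -/
def e3 (i : Fin 3) : Vec := EuclideanSpace.single i 1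

/-- divergence of a vector field -/
def div3 (u : VF) (x : Vec) : ℝ := ∑ i, fderiv ℝ u x (e3 i) i

/-- Laplacian of a vector field -/
def lap3 (u : VF) (x : Vec) : Vec := ∑ i, iteratedFDeriv ℝ 2 u x (fun _ => e3 i)

/-- directional derivative `(a · ∇)u` -/
def dirD (a : Vec) (u : VF) (x : Vec) : Vec := fderiv ℝ u x a

/-- the gradient matrix `(∇u)_{ij} = ∂_j u_i` of a vector field -/
def gradVF (u : VF) (x : Vec) : Mat3 := mk9 fun ij => fderiv ℝ u x (e3 ij.2) ij.1

/-- row-wise divergence of a matrix field -/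
def divMat (F : MF) : VF := fun x => mk3 fun i => ∑ j, fderiv ℝ (fun y => F y (i, j)) x (e3 j)

/-- Lebesgue measure restricted to `Ω` -/
def μΩ (Ω : Set Vec) : Measure Vec := volume.restrict Ω

/-- the `L^p(Ω)` norm (`p = ∞` allowed) -/
def LpN {E : Type*} [NormedAddCommGroup E] (Ω : Set Vec) (p : ℝ≥0∞) (u : Vec → E) : ℝ≥0∞ :=
  eLpNorm u p (μΩ Ω)

/-- the weak Lorentz `L^{p,∞}(Ω)` quasinorm -/
def wLor {E : Type*} [NormedAddCommGroup E] (Ω : Set Vec) (p : ℝ) (u : Vec → E) : ℝ≥0∞ :=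
  ⨆ t : ℝ≥0, (t : ℝ≥0∞) * (μΩ Ω {x | (t : ℝ) < ‖u x‖}) ^ (1 / p)

/-- the Lorentz `L^{p,1}(Ω)` norm -/
def lor1 {E : Type*} [NormedAddCommGroup E] (Ω : Set Vec) (p : ℝ) (u : Vec → E) : ℝ≥0∞ :=
  ∫⁻ t in Ioi (0 : ℝ), (μΩ Ω {x | t < ‖u x‖}) ^ (1 / p)

/-- the `L^{r,∞}(Ω)` norm, with the convention that it is the `L^∞` norm for `r = ∞` -/
def lorN (Ω : Set Vec) (r : ℝ≥0∞) (u : VF) : ℝ≥0∞ :=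
  if r = ∞ then LpN Ω ∞ u else wLor Ω r.toReal u

/-- `Ω ⊆ ℝ³` is an exterior domain with smooth boundary -/
structure ExteriorDomain (Ω : Set Vec) : Prop where
  isOpen : IsOpen Ω
  compl_compact : IsCompact Ωᶜ
  nonempty : Ω.Nonempty
  connected : IsConnected Ω
  smooth_boundary : ∀ x ∈ frontier Ω, ∃ (U : Set Vec) (φ : Vec → ℝ),
    x ∈ U ∧ IsOpen U ∧ ContDiff ℝ (⊤ : ℕ∞) φ ∧ (∀ y ∈ U, (y ∈ Ω ↔ φ y < 0)) ∧
    ∀ y ∈ U ∩ frontier Ω, gradient φ y ≠ 0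

/-- weak form of `div u = 0` in `Ω` together with zero normal trace on `∂Ω`
(membership in the solenoidal space, apart from integrability) -/
def WeakDivFree (Ω : Set Vec) (u : VF) : Prop :=
  ∀ φ : Vec → ℝ, ContDiff ℝ (⊤ : ℕ∞) φ → HasCompactSupport φ →
    ∫ x in Ω, ⟪u x, gradient φ x⟫ = 0

/-- membership in `L^q_σ(Ω)` -/
def MemLqσ (Ω : Set Vec) (q : ℝ≥0∞) (u : VF) : Prop :=
  MemLp u q (μΩ Ω) ∧ WeakDivFree Ω u

/-- membership in `L^{q,∞}_σ(Ω)` -/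
def MemWeakLqσ (Ω : Set Vec) (q : ℝ) (u : VF) : Prop :=
  AEStronglyMeasurable u (μΩ Ω) ∧ wLor Ω q u < ∞ ∧ WeakDivFree Ω u

/-- membership in `L^{q,1}_σ(Ω)` -/
def MemLor1σ (Ω : Set Vec) (q : ℝ) (u : VF) : Prop :=
  AEStronglyMeasurable u (μΩ Ω) ∧ lor1 Ω q u < ∞ ∧ WeakDivFree Ω u

/-- the `W^{3,2}(0,𝒯)` norm of the oscillation profile `ξ` -/
def W32Norm (𝒯 : ℝ) (ξ : ℝ → Vec) : ℝ :=
  (∑ k ∈ Finset.range 4, ∫ t in Ioo 0 𝒯, ‖iteratedDeriv k ξ t‖ ^ 2) ^ ((1 : ℝ) / 2)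

/-- `ξ` is a `𝒯`-periodic, mean-zero profile of class `W^{3,2}(0,𝒯)` -/
structure PeriodicData (𝒯 : ℝ) (ξ : ℝ → Vec) : Prop where
  pos : 0 < 𝒯
  periodic : ∀ t, ξ (t + 𝒯) = ξ t
  mean_zero : ∫ t in Ioo 0 𝒯, ξ t = 0
  regular : ContDiff ℝ 2 ξ
  thirdDeriv : ∀ᵐ t, DifferentiableAt ℝ (iteratedDeriv 2 ξ) t
  sobolev : MemLp (iteratedDeriv 3 ξ) 2 (volume.restrict (Ioo 0 𝒯))

/-- the transition function `h`  -/
structure TransitionFn (h : ℝ → ℝ) : Prop where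
  c1 : ContDiff ℝ 1 h
  mem_Icc : ∀ t, h t ∈ Icc (0 : ℝ) 1
  before : ∀ t ≤ 0, h t = 0
  after : ∀ t ≥ 1, h t = 1

/-- `|h′|₀ = sup_{t ≥ 0} |h′(t)|` -/
def hp0 (h : ℝ → ℝ) : ℝ := ⨆ t : Ici (0 : ℝ), |deriv h t.1|

/-- `(v, p_v)` is a `𝒯`-periodic solution of the time-periodic Navier–Stokes problem
driven by the oscillation `ξ` -/
structure IsPeriodicSolution (Ω : Set Vec) (𝒯 : ℝ) (ξ : ℝ → Vec)
    (v : ℝ → VF) (pv : ℝ → Vec → ℝ) : Prop where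
  periodic_v : ∀ t, v (t + 𝒯) = v t
  periodic_p : ∀ t, pv (t + 𝒯) = pv t
  pde : ∀ t, ∀ x ∈ Ω,
    deriv (fun τ => v τ x) t + dirD (v t x) (v t) x
      = lap3 (v t) x + dirD (ξ t) (v t) x - gradient (pv t) x
  incompressible : ∀ t, ∀ x ∈ Ω, div3 (v t) x = 0
  bc : ∀ t, ∀ x ∈ frontier Ω, v t x = ξ t
  decay : ∀ t, Tendsto (v t) (cocompact Vec) (𝓝 0)

/-- iterated time derivative `∂_t^k` of a time-dependent field -/
def tD {E : Type*} [NormedAddCommGroup E] [NormedSpace ℝ E] (k : ℕ)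
    (v : ℝ → Vec → E) : ℝ → Vec → E :=
  (fun w => fun t x => deriv (fun τ => w τ x) t)^[k] v

/-- the `D^{m,2}(Ω)` seminorm -/
def Dm2 {E : Type*} [NormedAddCommGroup E] [NormedSpace ℝ E] (Ω : Set Vec) (m : ℕ)
    (u : Vec → E) : ℝ≥0∞ :=
  eLpNorm (fun x => iteratedFDeriv ℝ m u x) 2 (μΩ Ω)

/-- the `L²(0,𝒯; B)` norm built from a seminorm `g` of the spatial variable -/
def L2T (𝒯 : ℝ) (g : ℝ → ℝ≥0∞) : ℝ≥0∞ := (∫⁻ t in Ioo (0 : ℝ) 𝒯, g t ^ (2 : ℝ)) ^ ((1 : ℝ) / 2)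

/-- the `L^∞(0,𝒯; B)` norm built from a seminorm `g` of the spatial variable -/
def LinfT (𝒯 : ℝ) (g : ℝ → ℝ≥0∞) : ℝ≥0∞ := essSup g (volume.restrict (Ioo (0 : ℝ) 𝒯))

/-- membership of `v` in `W^{2,2}(D^{2,2}) ∩ W^{1,2}(D^{4,2}) ∩ W^{2,∞}(W^{1,2}) ∩ L^∞(D^{3,2})` -/
def VClass (Ω : Set Vec) (𝒯 : ℝ) (v : ℝ → VF) : Prop :=
  (∀ k ≤ 2, L2T 𝒯 (fun t => Dm2 Ω 2 (tD k v t)) < ∞) ∧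
  (∀ k ≤ 1, L2T 𝒯 (fun t => Dm2 Ω 4 (tD k v t)) < ∞) ∧
  (∀ k ≤ 2, LinfT 𝒯 (fun t => Dm2 Ω 0 (tD k v t) + Dm2 Ω 1 (tD k v t)) < ∞) ∧
  LinfT 𝒯 (fun t => Dm2 Ω 3 (v t)) < ∞

/-- membership of `p_v` in `L^∞(W^{1,2}) ∩ W^{1,2}(D^{3,2})` -/
def PClass (Ω : Set Vec) (𝒯 : ℝ) (p : ℝ → Vec → ℝ) : Prop :=
  LinfT 𝒯 (fun t => Dm2 Ω 0 (p t) + Dm2 Ω 1 (p t)) < ∞ ∧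
  ∀ k ≤ 1, L2T 𝒯 (fun t => Dm2 Ω 3 (tD k p t)) < ∞

/-- the evolution operator `T(t,s)` (and its adjoint) generated by the non-autonomous
Oseen operator `-P[Δ + η(t)·∇]` in `Ω`, with homogeneous Dirichlet boundary condition
(Hansel–Rhandi) -/
structure OseenEvolution (Ω : Set Vec) (η : ℝ → Vec) where
  T : ℝ → ℝ → VF → VF
  Tstar : ℝ → ℝ → VF → VF
  init : ∀ s f, T s s f = f
  linear : ∀ t s, IsLinearMap ℝ (T t s)
  comp : ∀ t r s, s ≤ r → r ≤ t → ∀ f, T t r (T r s f) = T t s f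
  pde : ∀ s ≥ 0, ∀ f : VF, WeakDivFree Ω f →
    ∃ p : ℝ → Vec → ℝ, ∀ t > s, ∀ x ∈ Ω,
      deriv (fun τ => T τ s f x) t
        = lap3 (T t s f) x + dirD (η t) (T t s f) x - gradient (p t) x
      ∧ div3 (T t s f) x = 0
  bc : ∀ s ≥ 0, ∀ f : VF, ∀ t > s, ∀ x ∈ frontier Ω, T t s f x = 0
  decay : ∀ s ≥ 0, ∀ f : VF, ∀ t > s, Tendsto (T t s f) (cocompact Vec) (𝓝 0)
  adjoint : ∀ s t f g, ∫ x in Ω, ⟪T t s f x, g x⟫ = ∫ x in Ω, ⟪f x, Tstar t s g x⟫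

/-- the Helmholtz projection `P` on `Ω` -/
structure Helmholtz (Ω : Set Vec) where
  P : VF → VF
  linear : IsLinearMap ℝ P
  idem : ∀ u, P (P u) = P u
  solenoidal : ∀ u : VF, ContDiff ℝ (⊤ : ℕ∞) u → WeakDivFree Ω (P u)
  grad_part : ∀ u : VF, ContDiff ℝ (⊤ : ℕ∞) u →
    ∃ p : Vec → ℝ, ∀ x ∈ Ω, u x - P u x = gradient p x

/-- `E` is the bounded extension of the composite operator `T(t,s)P div` acting on
(Lorentz-)Lebesgue spaces of matrix fields -/
structure ExtensionOf (Ω : Set Vec) (η : ℝ → Vec) (O : OseenEvolution Ω η)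
    (H : Helmholtz Ω) (E : ℝ → ℝ → MF → VF) : Prop where
  agrees : ∀ t s (F : MF), ContDiff ℝ (⊤ : ℕ∞) F → HasCompactSupport F → tsupport F ⊆ Ω →
    E t s F = O.T t s (H.P (divMat F))
  linear : ∀ t s, IsLinearMap ℝ (E t s)
  bound : ∀ q r : ℝ, 3 / 2 < q → q < r → ∃ C > 0, ∀ s t : ℝ, 0 ≤ s → s < t → ∀ F : MF,
    AEStronglyMeasurable F (μΩ Ω) →
    LpN Ω (ENNReal.ofReal r) (E t s F)
      ≤ ENNReal.ofReal C * ENNReal.ofReal ((t - s) ^ (-((3 / q - 3 / r) / 2) - 1 / 2))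
        * wLor Ω q F
  bound_top : ∀ q : ℝ, 3 / 2 < q → ∃ C > 0, ∀ s t : ℝ, 0 ≤ s → s < t → ∀ F : MF,
    AEStronglyMeasurable F (μΩ Ω) →
    LpN Ω ∞ (E t s F)
      ≤ ENNReal.ofReal C * ENNReal.ofReal ((t - s) ^ (-(3 / (2 * q)) - 1 / 2)) * wLor Ω q F

/-- the forcing term `f = -h′ v + (h - h²)(v - ξ)·∇v` -/
def fForce (h : ℝ → ℝ) (ξ : ℝ → Vec) (v : ℝ → VF) : ℝ → VF := fun t x =>
  -(deriv h t) • v t x + (h t - h t ^ 2) • dirD (v t x - ξ t) (v t) x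

/-- tensor product `u ⊗ w` of two vector fields -/
def tensF (u w : VF) : MF := fun x => mk9 fun ij => u x ij.1 * w x ij.2

/-- the nonlinearity `F(w) = w ⊗ w + h (w ⊗ v + v ⊗ w)` -/
def Fnl (h : ℝ → ℝ) (v w : ℝ → VF) : ℝ → MF := fun s =>
  tensF (w s) (w s) + h s • (tensF (w s) (v s) + tensF (v s) (w s))

/-- `w₀(t) = ∫_0^t T(t,s) P f(s) ds` -/
def w0fn {Ω : Set Vec} {η : ℝ → Vec} (O : OseenEvolution Ω η) (H : Helmholtz Ω)
    (h : ℝ → ℝ) (ξ : ℝ → Vec) (v : ℝ → VF) : ℝ → VF := fun t x =>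
  ∫ s in Ioo (0 : ℝ) t, O.T t s (H.P (fForce h ξ v s)) x

/-- the weighted norm `[w]_q = sup_{t>0} t^{1/2 - 3/(2q)} ‖w(t)‖_{q,∞}` -/
def brk (Ω : Set Vec) (q : ℝ) (w : ℝ → VF) : ℝ≥0∞ :=
  ⨆ t : Ioi (0 : ℝ), ENNReal.ofReal ((t : ℝ) ^ ((1 : ℝ) / 2 - 3 / (2 * q))) * wLor Ω q (w t)

/-- `[v]₃ = sup_{t>0} ‖v(t)‖_{3,∞}` -/
def vsup3 (Ω : Set Vec) (v : ℝ → VF) : ℝ≥0∞ := ⨆ t : Ioi (0 : ℝ), wLor Ω 3 (v t)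

/-- weak-* continuity on `(0,∞)` with values in Lorentz spaces, tested against
smooth compactly supported fields -/
def WeakStarCont (Ω : Set Vec) (w : ℝ → VF) : Prop :=
  ∀ φ : VF, ContDiff ℝ (⊤ : ℕ∞) φ → HasCompactSupport φ →
    ContinuousOn (fun t => ∫ x in Ω, ⟪w t x, φ x⟫) (Ioi 0)

/-- membership in the space `X_q` -/
structure MemX (Ω : Set Vec) (q : ℝ) (w : ℝ → VF) : Prop where
  meas : ∀ t, 0 < t → AEStronglyMeasurable (w t) (μΩ Ω)
  solenoidal : ∀ t, 0 < t → WeakDivFree Ω (w t)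
  fin3 : brk Ω 3 w < ∞
  finq : brk Ω q w < ∞
  wstar : WeakStarCont Ω w
  zero : Tendsto (fun t => wLor Ω 3 (w t)) (𝓝[>] 0) (𝓝 0)

/-- `Ψw` is determined by `⟨(Ψw)(t), φ⟩ = ∫_0^t ⟨F(w)(s), ∇T(t,s)*φ⟩ ds` -/
def PsiProp {Ω : Set Vec} {η : ℝ → Vec} (O : OseenEvolution Ω η) (h : ℝ → ℝ)
    (v w Ψw : ℝ → VF) : Prop :=
  ∀ t, 0 < t → ∀ φ : VF, ContDiff ℝ (⊤ : ℕ∞) φ → HasCompactSupport φ →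
    (∀ x ∈ Ω, div3 φ x = 0) →
    ∫ x in Ω, ⟪Ψw t x, φ x⟫
      = ∫ s in Ioo (0 : ℝ) t, ∫ x in Ω, ⟪Fnl h v w s x, gradVF (O.Tstar t s φ) x⟫

/-- the weak form (4.1) of the integral equation -/
def WeakIntEq {Ω : Set Vec} {η : ℝ → Vec} (O : OseenEvolution Ω η) (H : Helmholtz Ω)
    (h : ℝ → ℝ) (ξ : ℝ → Vec) (v w : ℝ → VF) : Prop :=
  ∀ t, 0 < t → ∀ φ : VF, ContDiff ℝ (⊤ : ℕ∞) φ → HasCompactSupport φ →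
    (∀ x ∈ Ω, div3 φ x = 0) →
    ∫ x in Ω, ⟪w t x, φ x⟫
      = (∫ x in Ω, ⟪w0fn O H h ξ v t x, φ x⟫)
        + ∫ s in Ioo (0 : ℝ) t, ∫ x in Ω, ⟪Fnl h v w s x, gradVF (O.Tstar t s φ) x⟫

/-- the integral equation `w(t) = w₀(t) - ∫_0^t T(t,s)P div (Fw)(s) ds`,
satisfied in `L^{3,∞}_σ(Ω)` (i.e. a.e. in `Ω`) for every `t > 0` -/
def IntEq {Ω : Set Vec} {η : ℝ → Vec} (O : OseenEvolution Ω η) (H : Helmholtz Ω)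
    (E : ℝ → ℝ → MF → VF) (h : ℝ → ℝ) (ξ : ℝ → Vec) (v w : ℝ → VF) : Prop :=
  ∀ t, 0 < t → ∀ᵐ x ∂(μΩ Ω),
    w t x = w0fn O H h ξ v t x - ∫ s in Ioo (0 : ℝ) t, E t s (Fnl h v w s) x

/-- the properties of the solution constructed in the main theorem:
membership in `C_{w*}((0,∞); L^{3,∞}_σ)`, the integral equation in `L^{3,∞}_σ`,
the initial condition, and the uniform bound by `C‖ξ‖_{W^{3,2}}` -/
def MainProps (Ω : Set Vec) (𝒯 : ℝ) (ξ : ℝ → Vec) (h : ℝ → ℝ) (v : ℝ → VF)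
    {η : ℝ → Vec} (O : OseenEvolution Ω η) (H : Helmholtz Ω) (E : ℝ → ℝ → MF → VF)
    (w : ℝ → VF) : Prop :=
  (∀ t, 0 < t → AEStronglyMeasurable (w t) (μΩ Ω) ∧ wLor Ω 3 (w t) < ∞ ∧
      WeakDivFree Ω (w t)) ∧
  WeakStarCont Ω w ∧
  IntEq O H E h ξ v w ∧
  Tendsto (fun t => wLor Ω 3 (w t)) (𝓝[>] 0) (𝓝 0) ∧
  ∃ C > 0, ∀ t ≥ 0, wLor Ω 3 (w t) ≤ ENNReal.ofReal (C * W32Norm 𝒯 ξ)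

end

open MeasureTheory Set Filter
open scoped ENNReal NNReal RealInnerProductSpace Topology

/-! The `L^∞` smoothing estimate `‖T(t,s)P div F‖_∞ ≤ C (t-s)^(-3/(2r)-1/2) ‖F‖_{r,∞}`, taken
with `r = q₀/2`, together with `‖w ⊗ w‖_{q₀/2,∞} ≤ ‖w‖_{q₀,∞}² ≤ s^(3/q₀-1) [w]_{q₀}²`, bounds the
integrand by `C [w]_{q₀}² (t-s)^(-a) s^(-b)` with `a = 1/2 + 3/q₀` and `b = 1 - 3/q₀`. Both
exponents are below `1` because `q₀ > 6`, so the Beta-type integral `∫₀ᵗ (t-s)^(-a) s^(-b) ds`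
converges and scales like `t^(1-a-b) = t^(-1/2)`. -/

lemma norm_tensF_self (u : VF) (x : Vec) : ‖tensF u u x‖ = ‖u x‖ ^ 2 := by
  rw [EuclideanSpace.norm_eq, ← Real.sqrt_sq (by positivity : 0 ≤ ‖u x‖ ^ 2),
    EuclideanSpace.norm_sq_eq, sq (∑ _, _), Finset.sum_mul_sum, Fintype.sum_prod_type]
  simp [tensF, mk9, mul_pow]

lemma aestronglyMeasurable_tensF {μ : Measure Vec} {u w : VF}
    (hu : AEStronglyMeasurable u μ) (hw : AEStronglyMeasurable w μ) :
    AEStronglyMeasurable (tensF u w) μ := by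
  have hcont : Continuous fun p : Vec × Vec => mk9 fun ij => p.1 ij.1 * p.2 ij.2 :=
    (PiLp.continuous_toLp 2 _).comp (continuous_pi fun _ => by fun_prop)
  exact hcont.comp_aestronglyMeasurable (hu.prodMk hw)

lemma wLor_tensF_self_le (Ω : Set Vec) (q : ℝ) (u : VF) :
    wLor Ω q (tensF u u) ≤ wLor Ω (2 * q) u ^ 2 := by
  refine iSup_le fun t => ?_
  obtain ⟨s, rfl⟩ : ∃ s : ℝ≥0, t = s ^ 2 := ⟨NNReal.sqrt t, (NNReal.sq_sqrt t).symm⟩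
  have hlevel : {x | ((s ^ 2 : ℝ≥0) : ℝ) < ‖tensF u u x‖} = {x | (s : ℝ) < ‖u x‖} := by
    ext x
    simp [norm_tensF_self, sq_lt_sq₀ s.coe_nonneg (norm_nonneg (u x))]
  calc ((s ^ 2 : ℝ≥0) : ℝ≥0∞) * μΩ Ω {x | ((s ^ 2 : ℝ≥0) : ℝ) < ‖tensF u u x‖} ^ (1 / q)
      = ((s : ℝ≥0∞) * μΩ Ω {x | (s : ℝ) < ‖u x‖} ^ (1 / (2 * q))) ^ 2 := by
        rw [hlevel, mul_pow, ← ENNReal.rpow_mul_natCast]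
        push_cast
        field_simp
    _ ≤ wLor Ω (2 * q) u ^ 2 := by
        gcongr
        exact le_iSup (fun r : ℝ≥0 => (r : ℝ≥0∞) * μΩ Ω {x | (r : ℝ) < ‖u x‖} ^ (1 / (2 * q))) s

lemma wLor_le_brk (Ω : Set Vec) (q : ℝ) (w : ℝ → VF) {s : ℝ} (hs : 0 < s) :
    wLor Ω q (w s) ≤ ENNReal.ofReal (s ^ (3 / (2 * q) - 1 / 2)) * brk Ω q w := by
  have hweighted : ENNReal.ofReal (s ^ (1 / 2 - 3 / (2 * q))) * wLor Ω q (w s) ≤ brk Ω q w :=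
    le_iSup (fun τ : Ioi (0 : ℝ) =>
      ENNReal.ofReal ((τ : ℝ) ^ (1 / 2 - 3 / (2 * q))) * wLor Ω q (w τ)) ⟨s, hs⟩
  calc wLor Ω q (w s)
      = ENNReal.ofReal (s ^ (3 / (2 * q) - 1 / 2))
          * (ENNReal.ofReal (s ^ (1 / 2 - 3 / (2 * q))) * wLor Ω q (w s)) := by
        rw [← mul_assoc, ← ENNReal.ofReal_mul (by positivity), ← Real.rpow_add hs]
        norm_num
    _ ≤ ENNReal.ofReal (s ^ (3 / (2 * q) - 1 / 2)) * brk Ω q w := by gcongr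

lemma lintegral_Ioo_rpow {r : ℝ} (hr : -1 < r) {t : ℝ} (ht : 0 ≤ t) :
    ∫⁻ s in Ioo 0 t, ENNReal.ofReal (s ^ r) = ENNReal.ofReal (t ^ (r + 1) / (r + 1)) := by
  have hint : IntegrableOn (fun s : ℝ => s ^ r) (Ioc 0 t) := by
    simpa [intervalIntegrable_iff, uIoc_of_le ht] using
      intervalIntegral.intervalIntegrable_rpow' (a := 0) (b := t) hr
  rw [setLIntegral_congr Ioo_ae_eq_Ioc, ← ofReal_integral_eq_lintegral_ofReal hint
    ((ae_restrict_iff' measurableSet_Ioc).2 (ae_of_all _ fun s hs => Real.rpow_nonneg hs.1.le r)),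
    ← intervalIntegral.integral_of_le ht, integral_rpow (Or.inl hr),
    Real.zero_rpow (by linarith), sub_zero]

lemma lintegral_Ioo_sub_rpow {r : ℝ} (hr : -1 < r) {t : ℝ} (ht : 0 ≤ t) :
    ∫⁻ s in Ioo 0 t, ENNReal.ofReal ((t - s) ^ r) = ENNReal.ofReal (t ^ (r + 1) / (r + 1)) := by
  rw [← lintegral_Ioo_rpow hr ht,
    ← (Measure.measurePreserving_sub_left volume t).setLIntegral_comp_preimage_emb
      (Homeomorph.subLeft t).measurableEmbedding,
    preimage_const_sub_Ioo, sub_self, sub_zero]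
  simp only [sub_sub_cancel]

lemma sub_rpow_mul_rpow_le {a b t s : ℝ} (ha : 0 ≤ a) (hb : 0 ≤ b) (hs : s ∈ Ioo 0 t) :
    (t - s) ^ (-a) * s ^ (-b) ≤ (t / 2) ^ (-a) * s ^ (-b) + (t / 2) ^ (-b) * (t - s) ^ (-a) := by
  obtain ⟨hs0, hst⟩ := hs
  have ht : 0 < t := hs0.trans hst
  have hts : 0 < t - s := by linarith
  rcases le_total s (t / 2) with hle | hge
  · have : (t - s) ^ (-a) ≤ (t / 2) ^ (-a) :=
      Real.rpow_le_rpow_of_nonpos (by positivity) (by linarith) (by linarith)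
    nlinarith [Real.rpow_pos_of_pos hs0 (-b), Real.rpow_pos_of_pos hts (-a),
      Real.rpow_pos_of_pos (by positivity : 0 < t / 2) (-b)]
  · have : s ^ (-b) ≤ (t / 2) ^ (-b) :=
      Real.rpow_le_rpow_of_nonpos (by positivity) hge (by linarith)
    nlinarith [Real.rpow_pos_of_pos hs0 (-b), Real.rpow_pos_of_pos hts (-a),
      Real.rpow_pos_of_pos (by positivity : 0 < t / 2) (-a)]

lemma lintegral_Ioo_sub_rpow_mul_rpow_le {a b : ℝ} (ha0 : 0 ≤ a) (ha1 : a < 1) (hb0 : 0 ≤ b)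
    (hb1 : b < 1) {t : ℝ} (ht : 0 < t) :
    ∫⁻ s in Ioo 0 t, ENNReal.ofReal ((t - s) ^ (-a) * s ^ (-b))
      ≤ ENNReal.ofReal ((2 ^ a / (1 - b) + 2 ^ b / (1 - a)) * t ^ (1 - a - b)) := by
  have h1a : 0 < 1 - a := by linarith
  have h1b : 0 < 1 - b := by linarith
  calc ∫⁻ s in Ioo 0 t, ENNReal.ofReal ((t - s) ^ (-a) * s ^ (-b))
      ≤ ∫⁻ s in Ioo 0 t, ENNReal.ofReal ((t / 2) ^ (-a)) * ENNReal.ofReal (s ^ (-b))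
          + ENNReal.ofReal ((t / 2) ^ (-b)) * ENNReal.ofReal ((t - s) ^ (-a)) := by
        refine setLIntegral_mono (by fun_prop) fun s hs => ?_
        have hs0 : 0 ≤ s := hs.1.le
        have hts : 0 ≤ t - s := by linarith [hs.2]
        rw [← ENNReal.ofReal_mul (by positivity), ← ENNReal.ofReal_mul (by positivity),
          ← ENNReal.ofReal_add (by positivity) (by positivity)]
        exact ENNReal.ofReal_le_ofReal (sub_rpow_mul_rpow_le ha0 hb0 hs)
    _ = ENNReal.ofReal ((t / 2) ^ (-a) * (t ^ (1 - b) / (1 - b))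
          + (t / 2) ^ (-b) * (t ^ (1 - a) / (1 - a))) := by
        rw [lintegral_add_left (by fun_prop), lintegral_const_mul _ (by fun_prop),
          lintegral_const_mul _ (by fun_prop), lintegral_Ioo_rpow (by linarith) ht.le,
          lintegral_Ioo_sub_rpow (by linarith) ht.le, neg_add_eq_sub, neg_add_eq_sub,
          ← ENNReal.ofReal_mul (by positivity), ← ENNReal.ofReal_mul (by positivity),
          ← ENNReal.ofReal_add (mul_nonneg (by positivity) (div_nonneg (by positivity) h1b.le))
            (mul_nonneg (by positivity) (div_nonneg (by positivity) h1a.le))]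
    _ = ENNReal.ofReal ((2 ^ a / (1 - b) + 2 ^ b / (1 - a)) * t ^ (1 - a - b)) := by
        congr 1
        have hsplit : ∀ c d : ℝ, (t / 2) ^ (-c) * t ^ (1 - d) = 2 ^ c * t ^ (1 - c - d) := by
          intro c d
          rw [Real.div_rpow ht.le zero_le_two, Real.rpow_neg zero_le_two, div_inv_eq_mul,
            mul_right_comm, ← Real.rpow_add ht]
          ring_nf
        rw [mul_div_assoc', mul_div_assoc', hsplit, hsplit, sub_right_comm 1 b a]
        ring

namespace ExtensionOf

variable {Ω : Set Vec} {η : ℝ → Vec} {O : OseenEvolution Ω η} {H : Helmholtz Ω}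
  {E : ℝ → ℝ → MF → VF}

lemma LpN_top_tensF_self_le (hE : ExtensionOf Ω η O H E) {q : ℝ} (hq : 3 < q) :
    ∃ C > 0, ∀ s t : ℝ, 0 ≤ s → s < t → ∀ u : VF, AEStronglyMeasurable u (μΩ Ω) →
      LpN Ω ∞ (E t s (tensF u u))
        ≤ ENNReal.ofReal C * ENNReal.ofReal ((t - s) ^ (-(3 / q) - 1 / 2)) * wLor Ω q u ^ 2 := by
  obtain ⟨C, hC, hbound⟩ := hE.bound_top (q / 2) (by linarith)
  refine ⟨C, hC, fun s t hs hst u hu => ?_⟩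
  have hq2 : 2 * (q / 2) = q := by ring
  calc LpN Ω ∞ (E t s (tensF u u))
      ≤ ENNReal.ofReal C * ENNReal.ofReal ((t - s) ^ (-(3 / (2 * (q / 2))) - 1 / 2))
          * wLor Ω (q / 2) (tensF u u) :=
        hbound s t hs hst _ (aestronglyMeasurable_tensF hu hu)
    _ ≤ ENNReal.ofReal C * ENNReal.ofReal ((t - s) ^ (-(3 / q) - 1 / 2)) * wLor Ω q u ^ 2 := by
        rw [hq2]
        gcongr
        simpa only [hq2] using wLor_tensF_self_le Ω (q / 2) u

theorem lintegral_LpN_top_tensF_self_le (hE : ExtensionOf Ω η O H E) {q : ℝ} (hq : 6 < q) :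
    ∃ C > 0, ∀ w : ℝ → VF, (∀ s, 0 < s → AEStronglyMeasurable (w s) (μΩ Ω)) → ∀ t, 0 < t →
      ∫⁻ s in Ioo 0 t, LpN Ω ∞ (E t s (tensF (w s) (w s)))
        ≤ ENNReal.ofReal C * brk Ω q w ^ 2 * ENNReal.ofReal (t ^ (-(1 : ℝ) / 2)) := by
  obtain ⟨C, hC, hpointwise⟩ := hE.LpN_top_tensF_self_le (q := q) (by linarith)
  have hq0 : 0 < q := by linarith
  have h3q : 3 / q < 1 / 2 := by rw [div_lt_iff₀ hq0]; linarith
  have h3q0 : 0 < 3 / q := by positivity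
  set a : ℝ := 3 / q + 1 / 2 with ha
  set b : ℝ := 1 - 3 / q with hb
  have h1a : 0 < 1 - a := by linarith
  have h1b : 0 < 1 - b := by linarith
  refine ⟨C * (2 ^ a / (1 - b) + 2 ^ b / (1 - a)), by positivity, fun w hw t ht => ?_⟩
  have hbound : ∀ s ∈ Ioo 0 t, LpN Ω ∞ (E t s (tensF (w s) (w s)))
      ≤ ENNReal.ofReal C * brk Ω q w ^ 2 * ENNReal.ofReal ((t - s) ^ (-a) * s ^ (-b)) := by
    rintro s ⟨hs, hst⟩
    have hts : 0 ≤ t - s := by linarith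
    have hweight : (s ^ (3 / (2 * q) - 1 / 2)) ^ 2 = s ^ (-b) := by
      rw [← Real.rpow_mul_natCast hs.le, hb]
      ring_nf
    have hexp : -(3 / q) - 1 / 2 = -a := by ring
    calc LpN Ω ∞ (E t s (tensF (w s) (w s)))
        ≤ ENNReal.ofReal C * ENNReal.ofReal ((t - s) ^ (-(3 / q) - 1 / 2)) * wLor Ω q (w s) ^ 2 :=
          hpointwise s t hs.le hst _ (hw s hs)
      _ ≤ ENNReal.ofReal C * ENNReal.ofReal ((t - s) ^ (-(3 / q) - 1 / 2))
            * (ENNReal.ofReal (s ^ (3 / (2 * q) - 1 / 2)) * brk Ω q w) ^ 2 := by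
          gcongr
          exact wLor_le_brk Ω q w hs
      _ = ENNReal.ofReal C * brk Ω q w ^ 2 * ENNReal.ofReal ((t - s) ^ (-a) * s ^ (-b)) := by
          rw [mul_pow, ← ENNReal.ofReal_pow (by positivity), hweight,
            ENNReal.ofReal_mul (by positivity), hexp]
          ring
  calc ∫⁻ s in Ioo 0 t, LpN Ω ∞ (E t s (tensF (w s) (w s)))
      ≤ ∫⁻ s in Ioo 0 t,
          ENNReal.ofReal C * brk Ω q w ^ 2 * ENNReal.ofReal ((t - s) ^ (-a) * s ^ (-b)) :=
        setLIntegral_mono' measurableSet_Ioo hbound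
    _ = ENNReal.ofReal C * brk Ω q w ^ 2
          * ∫⁻ s in Ioo 0 t, ENNReal.ofReal ((t - s) ^ (-a) * s ^ (-b)) :=
        lintegral_const_mul _ (by fun_prop)
    _ ≤ ENNReal.ofReal C * brk Ω q w ^ 2
          * ENNReal.ofReal ((2 ^ a / (1 - b) + 2 ^ b / (1 - a)) * t ^ (1 - a - b)) := by
        gcongr
        exact lintegral_Ioo_sub_rpow_mul_rpow_le (by positivity) (by linarith) (by linarith)
          (by linarith) ht
    _ = ENNReal.ofReal (C * (2 ^ a / (1 - b) + 2 ^ b / (1 - a))) * brk Ω q w ^ 2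
          * ENNReal.ofReal (t ^ (-(1 : ℝ) / 2)) := by
        have hexp : 1 - a - b = -(1 : ℝ) / 2 := by ring
        rw [hexp, ENNReal.ofReal_mul (by positivity), ENNReal.ofReal_mul hC.le]
        ring

end ExtensionOf

theorem statement17_general (Ω : Set Vec) (𝒯 : ℝ)
    (ε : ℝ) (hε : ε ∈ Ioo (0 : ℝ) (1 / 4)) :
    ∃ ε₀ > 0, ∀ (ξ : ℝ → Vec) (h : ℝ → ℝ) (v : ℝ → VF) (pv : ℝ → Vec → ℝ),
      PeriodicData 𝒯 ξ → TransitionFn h → W32Norm 𝒯 ξ < ε₀ →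
      IsPeriodicSolution Ω 𝒯 ξ v pv → VClass Ω 𝒯 v → PClass Ω 𝒯 pv →
      ∀ (O : OseenEvolution Ω (fun t => h t • ξ t)) (H : Helmholtz Ω)
        (E : ℝ → ℝ → MF → VF), ExtensionOf Ω (fun t => h t • ξ t) O H E →
      ∃ C > 0, ∀ w : ℝ → VF, MemX Ω (3 / (2 * ε)) w → ∀ t : ℝ, 0 < t →
        ∫⁻ s in Ioo (0 : ℝ) t, LpN Ω ∞ (E t s (tensF (w s) (w s)))
          ≤ ENNReal.ofReal C * brk Ω (3 / (2 * ε)) w ^ (2 : ℕ)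
            * ENNReal.ofReal (t ^ (-(1 : ℝ) / 2)) := by
  obtain ⟨hε0, hε1⟩ := hε
  have hq : 6 < 3 / (2 * ε) := by rw [lt_div_iff₀ (by positivity)]; linarith
  refine ⟨1, one_pos, fun ξ h v pv _ _ _ _ _ _ O H E hE => ?_⟩
  obtain ⟨C, hC, hbound⟩ := hE.lintegral_LpN_top_tensF_self_le hq
  exact ⟨C, hC, fun w hw t ht => hbound w hw.meas t ht⟩

/-- `L^∞` estimate for the quadratic term: for `ε ∈ (0,1/4)`,
`q₀ = 3/(2ε) > 6`, `D = ‖ξ‖_{W^{3,2}} < ε₀` and `w ∈ X_{q₀}`, there is `C > 0` with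
`∫_0^t ‖T(t,s)P div (w⊗w)(s)‖_∞ ds ≤ C [w]_{q₀}² t^{-1/2}` for all `t > 0`. -/
theorem statement17 (Ω : Set Vec) (hΩ : ExteriorDomain Ω) (𝒯 : ℝ) (h𝒯 : 0 < 𝒯)
    (ε : ℝ) (hε : ε ∈ Ioo (0 : ℝ) (1 / 4)) :
    ∃ ε₀ > 0, ∀ (ξ : ℝ → Vec) (h : ℝ → ℝ) (v : ℝ → VF) (pv : ℝ → Vec → ℝ),
      PeriodicData 𝒯 ξ → TransitionFn h → W32Norm 𝒯 ξ < ε₀ →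
      IsPeriodicSolution Ω 𝒯 ξ v pv → VClass Ω 𝒯 v → PClass Ω 𝒯 pv →
      ∀ (O : OseenEvolution Ω (fun t => h t • ξ t)) (H : Helmholtz Ω)
        (E : ℝ → ℝ → MF → VF), ExtensionOf Ω (fun t => h t • ξ t) O H E →
      ∃ C > 0, ∀ w : ℝ → VF, MemX Ω (3 / (2 * ε)) w → ∀ t : ℝ, 0 < t →
        ∫⁻ s in Ioo (0 : ℝ) t, LpN Ω ∞ (E t s (tensF (w s) (w s)))
          ≤ ENNReal.ofReal C * brk Ω (3 / (2 * ε)) w ^ (2 : ℕ)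
            * ENNReal.ofReal (t ^ (-(1 : ℝ) / 2)) :=
  statement17_general Ω 𝒯 ε hε
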